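/- Temporal Duality Theorem (finite traces): on W-free temporal formulas (built from atoms, ⊥, ⊤, ∧, ∨, →, ●, •̂, S, T, ○, ○̂, U, R, with •̂ and ○̂ primitive) define the time-swap map σ recursively by fixing atoms and Boolean connectives and swapping each future connective with its past counterpart: ○/●, ○̂/•̂, U/S, R/T. Then a W-free formula φ is a THT_f-tautology (M,k⊨φ for every HT-trace M of finite length λ∈ℕ and every k<λ) if and only if σ(φ) is a THT_f-tautology. -/
import Mathlib


inductive Formula (A : Type) : Type
  | atom (a : A)
  | falsum
  | verum
  | conj (φ ψ : Formula A)
  | disj (φ ψ : Formula A)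
  | impl (φ ψ : Formula A)
  | prev (φ : Formula A)
  | wprev (φ : Formula A)
  | since (φ ψ : Formula A)
  | trigger (φ ψ : Formula A)
  | next (φ : Formula A)
  | wnext (φ : Formula A)
  | untl (φ ψ : Formula A)
  | release (φ ψ : Formula A)
  | whil (φ ψ : Formula A)

/-- THT satisfaction: `satAux l T H k φ` is `⟨H,T⟩,k ⊨ φ` on traces of length `l`
(with weak previous `•̂` and weak next `○̂` as primitive connectives). -/
def satAux {A : Type} (l : ℕ∞) (T : ℕ → Set A) : (ℕ → Set A) → ℕ → Formula A → Prop
  | H, k, .atom a => a ∈ H k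
  | _, _, .falsum => False
  | _, _, .verum => True
  | H, k, .conj φ ψ => satAux l T H k φ ∧ satAux l T H k ψ
  | H, k, .disj φ ψ => satAux l T H k φ ∨ satAux l T H k ψ
  | H, k, .impl φ ψ =>
      (satAux l T H k φ → satAux l T H k ψ) ∧ (satAux l T T k φ → satAux l T T k ψ)
  | H, k, .prev φ => 0 < k ∧ satAux l T H (k - 1) φ
  | H, k, .wprev φ => k = 0 ∨ satAux l T H (k - 1) φ
  | H, k, .since φ ψ =>
      ∃ j, j ≤ k ∧ satAux l T H j ψ ∧ ∀ i, j < i → i ≤ k → satAux l T H i φ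
  | H, k, .trigger φ ψ =>
      ∀ j, j ≤ k → satAux l T H j ψ ∨ ∃ i, j < i ∧ i ≤ k ∧ satAux l T H i φ
  | H, k, .next φ => ((k + 1 : ℕ) : ℕ∞) < l ∧ satAux l T H (k + 1) φ
  | H, k, .wnext φ => ((k + 1 : ℕ) : ℕ∞) = l ∨ satAux l T H (k + 1) φ
  | H, k, .untl φ ψ =>
      ∃ j, k ≤ j ∧ (j : ℕ∞) < l ∧ satAux l T H j ψ ∧ ∀ i, k ≤ i → i < j → satAux l T H i φ
  | H, k, .release φ ψ =>
      ∀ j, k ≤ j → (j : ℕ∞) < l → satAux l T H j ψ ∨ ∃ i, k ≤ i ∧ i < j ∧ satAux l T H i φ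
  | H, k, .whil φ ψ =>
      (∀ j, k ≤ j → (j : ℕ∞) < l →
          satAux l T H j φ ∨ ∃ i, k ≤ i ∧ i < j ∧ ¬ satAux l T H i ψ)
        ∧
      (∀ j, k ≤ j → (j : ℕ∞) < l →
          satAux l T T j φ ∨ ∃ i, k ≤ i ∧ i < j ∧ ¬ satAux l T T i ψ)

/-- `Sat l H T k φ` : the HT-trace `⟨H,T⟩` of length `l` satisfies `φ` at time `k`. -/
def Sat {A : Type} (l : ℕ∞) (H T : ℕ → Set A) (k : ℕ) (φ : Formula A) : Prop :=
  satAux l T H k φ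

/-- `⟨H,T⟩` is an HT-trace of length `l`. -/
def IsHT {A : Type} (l : ℕ∞) (H T : ℕ → Set A) : Prop :=
  ∀ i : ℕ, (i : ℕ∞) < l → H i ⊆ T i

/-- THT-equivalence of two formulas. -/
def ThtEquiv {A : Type} (φ ψ : Formula A) : Prop :=
  ∀ (l : ℕ∞) (H T : ℕ → Set A), IsHT l H T →
    ∀ k : ℕ, (k : ℕ∞) < l → (Sat l H T k φ ↔ Sat l H T k ψ)

/-- W-free formulas (no W; `•̂` and `○̂` primitive, → allowed). -/
def WFree {A : Type} : Formula A → Prop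
  | .atom _ => True
  | .falsum => True
  | .verum => True
  | .conj φ ψ => WFree φ ∧ WFree ψ
  | .disj φ ψ => WFree φ ∧ WFree ψ
  | .impl φ ψ => WFree φ ∧ WFree ψ
  | .prev φ => WFree φ
  | .wprev φ => WFree φ
  | .since φ ψ => WFree φ ∧ WFree ψ
  | .trigger φ ψ => WFree φ ∧ WFree ψ
  | .next φ => WFree φ
  | .wnext φ => WFree φ
  | .untl φ ψ => WFree φ ∧ WFree ψ
  | .release φ ψ => WFree φ ∧ WFree ψ
  | .whil _ _ => False

/-- The time-swap map `σ`, swapping each future connective with its past counterpart: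
○/●, ○̂/•̂, U/S, R/T; atoms and Boolean connectives are fixed. -/
def swapTime {A : Type} : Formula A → Formula A
  | .atom a => .atom a
  | .falsum => .falsum
  | .verum => .verum
  | .conj φ ψ => .conj (swapTime φ) (swapTime ψ)
  | .disj φ ψ => .disj (swapTime φ) (swapTime ψ)
  | .impl φ ψ => .impl (swapTime φ) (swapTime ψ)
  | .prev φ => .next (swapTime φ)
  | .wprev φ => .wnext (swapTime φ)
  | .since φ ψ => .untl (swapTime φ) (swapTime ψ)
  | .trigger φ ψ => .release (swapTime φ) (swapTime ψ)
  | .next φ => .prev (swapTime φ)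
  | .wnext φ => .wprev (swapTime φ)
  | .untl φ ψ => .since (swapTime φ) (swapTime ψ)
  | .release φ ψ => .trigger (swapTime φ) (swapTime ψ)
  | .whil φ ψ => .whil (swapTime φ) (swapTime ψ)

/-- `φ` is a THT_f-tautology: satisfied by every HT-trace of any finite length
at every time point. -/
def TautF {A : Type} (φ : Formula A) : Prop :=
  ∀ (l : ℕ) (H T : ℕ → Set A), IsHT (l : ℕ∞) H T →
    ∀ k : ℕ, k < l → Sat (l : ℕ∞) H T k φ

section Aux
variable {A : Type}

lemma swap_swap (φ : Formula A) : swapTime (swapTime φ) = φ := by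
  induction φ <;> simp [swapTime, *]

lemma wfree_swap (φ : Formula A) (h : WFree φ) : WFree (swapTime φ) := by
  induction φ <;> simp_all [swapTime, WFree]

lemma sat_ext (l : ℕ) {T T' : ℕ → Set A}
    (hT : ∀ i, i < l → T i = T' i) :
    ∀ (φ : Formula A) (H H' : ℕ → Set A), (∀ i, i < l → H i = H' i) →
      ∀ k, k < l → (satAux (l : ℕ∞) T H k φ ↔ satAux (l : ℕ∞) T' H' k φ) := by
  intro φ
  induction φ with
  | atom a => intro H H' hH k hk; simp [satAux, hH k hk]
  | falsum => intro H H' hH k hk; simp [satAux]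
  | verum => intro H H' hH k hk; simp [satAux]
  | conj φ ψ ihφ ihψ =>
      intro H H' hH k hk
      simp only [satAux]
      exact and_congr (ihφ H H' hH k hk) (ihψ H H' hH k hk)
  | disj φ ψ ihφ ihψ =>
      intro H H' hH k hk
      simp only [satAux]
      exact or_congr (ihφ H H' hH k hk) (ihψ H H' hH k hk)
  | impl φ ψ ihφ ihψ =>
      intro H H' hH k hk
      simp only [satAux]
      exact and_congr (imp_congr (ihφ H H' hH k hk) (ihψ H H' hH k hk))
        (imp_congr (ihφ T T' hT k hk) (ihψ T T' hT k hk))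
  | prev φ ih =>
      intro H H' hH k hk
      simp only [satAux]
      exact and_congr Iff.rfl (ih H H' hH (k - 1) (by omega))
  | wprev φ ih =>
      intro H H' hH k hk
      simp only [satAux]
      exact or_congr Iff.rfl (ih H H' hH (k - 1) (by omega))
  | since φ ψ ihφ ihψ =>
      intro H H' hH k hk
      simp only [satAux]
      constructor
      · rintro ⟨j, hj, hψ, hφ⟩
        exact ⟨j, hj, (ihψ H H' hH j (by omega)).mp hψ,
          fun i h1 h2 => (ihφ H H' hH i (by omega)).mp (hφ i h1 h2)⟩
      · rintro ⟨j, hj, hψ, hφ⟩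
        exact ⟨j, hj, (ihψ H H' hH j (by omega)).mpr hψ,
          fun i h1 h2 => (ihφ H H' hH i (by omega)).mpr (hφ i h1 h2)⟩
  | trigger φ ψ ihφ ihψ =>
      intro H H' hH k hk
      simp only [satAux]
      constructor
      · intro h j hj
        rcases h j hj with h | ⟨i, h1, h2, h3⟩
        · exact Or.inl ((ihψ H H' hH j (by omega)).mp h)
        · exact Or.inr ⟨i, h1, h2, (ihφ H H' hH i (by omega)).mp h3⟩
      · intro h j hj
        rcases h j hj with h | ⟨i, h1, h2, h3⟩
        · exact Or.inl ((ihψ H H' hH j (by omega)).mpr h)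
        · exact Or.inr ⟨i, h1, h2, (ihφ H H' hH i (by omega)).mpr h3⟩
  | next φ ih =>
      intro H H' hH k hk
      simp only [satAux, Nat.cast_lt]
      constructor
      · rintro ⟨h1, h2⟩; exact ⟨h1, (ih H H' hH (k + 1) h1).mp h2⟩
      · rintro ⟨h1, h2⟩; exact ⟨h1, (ih H H' hH (k + 1) h1).mpr h2⟩
  | wnext φ ih =>
      intro H H' hH k hk
      simp only [satAux, Nat.cast_inj]
      rcases eq_or_ne (k + 1) l with h | h
      · simp [h]
      · simp only [h, false_or]
        exact ih H H' hH (k + 1) (by omega)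
  | untl φ ψ ihφ ihψ =>
      intro H H' hH k hk
      simp only [satAux, Nat.cast_lt]
      constructor
      · rintro ⟨j, h1, h2, h3, h4⟩
        exact ⟨j, h1, h2, (ihψ H H' hH j h2).mp h3,
          fun i hi1 hi2 => (ihφ H H' hH i (by omega)).mp (h4 i hi1 hi2)⟩
      · rintro ⟨j, h1, h2, h3, h4⟩
        exact ⟨j, h1, h2, (ihψ H H' hH j h2).mpr h3,
          fun i hi1 hi2 => (ihφ H H' hH i (by omega)).mpr (h4 i hi1 hi2)⟩
  | release φ ψ ihφ ihψ =>
      intro H H' hH k hk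
      simp only [satAux, Nat.cast_lt]
      constructor
      · intro h j hj1 hj2
        rcases h j hj1 hj2 with h | ⟨i, h1, h2, h3⟩
        · exact Or.inl ((ihψ H H' hH j hj2).mp h)
        · exact Or.inr ⟨i, h1, h2, (ihφ H H' hH i (by omega)).mp h3⟩
      · intro h j hj1 hj2
        rcases h j hj1 hj2 with h | ⟨i, h1, h2, h3⟩
        · exact Or.inl ((ihψ H H' hH j hj2).mpr h)
        · exact Or.inr ⟨i, h1, h2, (ihφ H H' hH i (by omega)).mpr h3⟩
  | whil φ ψ ihφ ihψ =>
      intro H H' hH k hk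
      simp only [satAux, Nat.cast_lt]
      refine and_congr ?_ ?_
      · constructor
        · intro h j hj1 hj2
          rcases h j hj1 hj2 with h | ⟨i, h1, h2, h3⟩
          · exact Or.inl ((ihφ H H' hH j hj2).mp h)
          · exact Or.inr ⟨i, h1, h2, fun c => h3 ((ihψ H H' hH i (by omega)).mpr c)⟩
        · intro h j hj1 hj2
          rcases h j hj1 hj2 with h | ⟨i, h1, h2, h3⟩
          · exact Or.inl ((ihφ H H' hH j hj2).mpr h)
          · exact Or.inr ⟨i, h1, h2, fun c => h3 ((ihψ H H' hH i (by omega)).mp c)⟩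
      · constructor
        · intro h j hj1 hj2
          rcases h j hj1 hj2 with h | ⟨i, h1, h2, h3⟩
          · exact Or.inl ((ihφ T T' hT j hj2).mp h)
          · exact Or.inr ⟨i, h1, h2, fun c => h3 ((ihψ T T' hT i (by omega)).mpr c)⟩
        · intro h j hj1 hj2
          rcases h j hj1 hj2 with h | ⟨i, h1, h2, h3⟩
          · exact Or.inl ((ihφ T T' hT j hj2).mpr h)
          · exact Or.inr ⟨i, h1, h2, fun c => h3 ((ihψ T T' hT i (by omega)).mp c)⟩

end Aux

section Aux2
variable {A : Type}

lemma swap_sat (l : ℕ) (T : ℕ → Set A) :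
    ∀ (φ : Formula A), WFree φ → ∀ (H : ℕ → Set A) (k : ℕ), k < l →
      (satAux (l : ℕ∞) T H k φ ↔
        satAux (l : ℕ∞) (fun i => T (l - 1 - i)) (fun i => H (l - 1 - i))
          (l - 1 - k) (swapTime φ)) := by
  intro φ
  induction φ with
  | atom a =>
      intro _ H k hk
      simp only [satAux, swapTime]
      rw [show l - 1 - (l - 1 - k) = k by omega]
  | falsum => intro _ H k hk; simp [satAux, swapTime]
  | verum => intro _ H k hk; simp [satAux, swapTime]
  | conj φ ψ ihφ ihψ =>
      intro h H k hk
      simp only [satAux, swapTime]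
      exact and_congr (ihφ h.1 H k hk) (ihψ h.2 H k hk)
  | disj φ ψ ihφ ihψ =>
      intro h H k hk
      simp only [satAux, swapTime]
      exact or_congr (ihφ h.1 H k hk) (ihψ h.2 H k hk)
  | impl φ ψ ihφ ihψ =>
      intro h H k hk
      simp only [satAux, swapTime]
      exact and_congr (imp_congr (ihφ h.1 H k hk) (ihψ h.2 H k hk))
        (imp_congr (ihφ h.1 T k hk) (ihψ h.2 T k hk))
  | prev φ ih =>
      intro h H k hk
      simp only [satAux, swapTime, Nat.cast_lt]
      constructor
      · rintro ⟨h1, h2⟩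
        refine ⟨by omega, ?_⟩
        have := (ih h H (k - 1) (by omega)).mp h2
        rwa [show l - 1 - (k - 1) = l - 1 - k + 1 by omega] at this
      · rintro ⟨h1, h2⟩
        refine ⟨by omega, ?_⟩
        rw [show l - 1 - k + 1 = l - 1 - (k - 1) by omega] at h2
        exact (ih h H (k - 1) (by omega)).mpr h2
  | wprev φ ih =>
      intro h H k hk
      simp only [satAux, swapTime, Nat.cast_inj]
      rcases eq_or_ne k 0 with h0 | h0
      · constructor
        · intro _; exact Or.inl (by omega)
        · intro _; exact Or.inl h0
      · have hne : ¬ (l - 1 - k + 1 = l) := by omega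
        simp only [h0, hne, false_or]
        rw [show l - 1 - k + 1 = l - 1 - (k - 1) by omega]
        exact ih h H (k - 1) (by omega)
  | since φ ψ ihφ ihψ =>
      intro h H k hk
      simp only [satAux, swapTime, Nat.cast_lt]
      constructor
      · rintro ⟨j, hj, hψ, hφ⟩
        refine ⟨l - 1 - j, by omega, by omega, (ihψ h.2 H j (by omega)).mp hψ, ?_⟩
        intro i' hi1 hi2
        have h3 := (ihφ h.1 H (l - 1 - i') (by omega)).mp (hφ (l - 1 - i') (by omega) (by omega))
        rwa [show l - 1 - (l - 1 - i') = i' by omega] at h3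
      · rintro ⟨j', hj1, hj2, hψ, hφ⟩
        refine ⟨l - 1 - j', by omega, ?_, ?_⟩
        · refine (ihψ h.2 H (l - 1 - j') (by omega)).mpr ?_
          rwa [show l - 1 - (l - 1 - j') = j' by omega]
        · intro i hi1 hi2
          exact (ihφ h.1 H i (by omega)).mpr (hφ (l - 1 - i) (by omega) (by omega))
  | trigger φ ψ ihφ ihψ =>
      intro h H k hk
      simp only [satAux, swapTime, Nat.cast_lt]
      constructor
      · intro hall j' hj1 hj2
        rcases hall (l - 1 - j') (by omega) with hψ | ⟨i, hi1, hi2, hφ⟩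
        · left
          have := (ihψ h.2 H (l - 1 - j') (by omega)).mp hψ
          rwa [show l - 1 - (l - 1 - j') = j' by omega] at this
        · right
          refine ⟨l - 1 - i, by omega, by omega, ?_⟩
          exact (ihφ h.1 H i (by omega)).mp hφ
      · intro hall j hj
        rcases hall (l - 1 - j) (by omega) (by omega) with hψ | ⟨i', hi1, hi2, hφ⟩
        · exact Or.inl ((ihψ h.2 H j (by omega)).mpr hψ)
        · right
          refine ⟨l - 1 - i', by omega, by omega, ?_⟩
          refine (ihφ h.1 H (l - 1 - i') (by omega)).mpr ?_
          rwa [show l - 1 - (l - 1 - i') = i' by omega]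
  | next φ ih =>
      intro h H k hk
      simp only [satAux, swapTime, Nat.cast_lt]
      constructor
      · rintro ⟨h1, h2⟩
        refine ⟨by omega, ?_⟩
        have := (ih h H (k + 1) h1).mp h2
        rwa [show l - 1 - (k + 1) = l - 1 - k - 1 by omega] at this
      · rintro ⟨h1, h2⟩
        refine ⟨by omega, ?_⟩
        rw [show l - 1 - k - 1 = l - 1 - (k + 1) by omega] at h2
        exact (ih h H (k + 1) (by omega)).mpr h2
  | wnext φ ih =>
      intro h H k hk
      simp only [satAux, swapTime, Nat.cast_inj]
      rcases eq_or_ne (k + 1) l with h0 | h0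
      · constructor
        · intro _; exact Or.inl (by omega)
        · intro _; exact Or.inl h0
      · have hne : ¬ (l - 1 - k = 0) := by omega
        simp only [h0, hne, false_or]
        rw [show l - 1 - k - 1 = l - 1 - (k + 1) by omega]
        exact ih h H (k + 1) (by omega)
  | untl φ ψ ihφ ihψ =>
      intro h H k hk
      simp only [satAux, swapTime, Nat.cast_lt]
      constructor
      · rintro ⟨j, hj1, hj2, hψ, hφ⟩
        refine ⟨l - 1 - j, by omega, (ihψ h.2 H j hj2).mp hψ, ?_⟩
        intro i' hi1 hi2
        have h3 := (ihφ h.1 H (l - 1 - i') (by omega)).mp (hφ (l - 1 - i') (by omega) (by omega))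
        rwa [show l - 1 - (l - 1 - i') = i' by omega] at h3
      · rintro ⟨j', hj1, hψ, hφ⟩
        refine ⟨l - 1 - j', by omega, by omega, ?_, ?_⟩
        · refine (ihψ h.2 H (l - 1 - j') (by omega)).mpr ?_
          rwa [show l - 1 - (l - 1 - j') = j' by omega]
        · intro i hi1 hi2
          exact (ihφ h.1 H i (by omega)).mpr (hφ (l - 1 - i) (by omega) (by omega))
  | release φ ψ ihφ ihψ =>
      intro h H k hk
      simp only [satAux, swapTime, Nat.cast_lt]
      constructor
      · intro hall j' hj1
        rcases hall (l - 1 - j') (by omega) (by omega) with hψ | ⟨i, hi1, hi2, hφ⟩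
        · left
          have := (ihψ h.2 H (l - 1 - j') (by omega)).mp hψ
          rwa [show l - 1 - (l - 1 - j') = j' by omega] at this
        · right
          refine ⟨l - 1 - i, by omega, by omega, ?_⟩
          exact (ihφ h.1 H i (by omega)).mp hφ
      · intro hall j hj1 hj2
        rcases hall (l - 1 - j) (by omega) with hψ | ⟨i', hi1, hi2, hφ⟩
        · exact Or.inl ((ihψ h.2 H j hj2).mpr hψ)
        · right
          refine ⟨l - 1 - i', by omega, by omega, ?_⟩
          refine (ihφ h.1 H (l - 1 - i') (by omega)).mpr ?_
          rwa [show l - 1 - (l - 1 - i') = i' by omega]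
  | whil φ ψ ihφ ihψ =>
      intro h
      exact absurd h (by simp [WFree])

end Aux2

lemma taut_swap {A : Type} (φ : Formula A) (hφ : WFree φ) (h : TautF φ) :
    TautF (swapTime φ) := by
  intro l H T hHT k hk
  set H' : ℕ → Set A := fun i => H (l - 1 - i) with hH'
  set T' : ℕ → Set A := fun i => T (l - 1 - i) with hT'
  have hHT' : IsHT (l : ℕ∞) H' T' := by
    intro i hi
    have hi' : i < l := by exact_mod_cast hi
    exact hHT (l - 1 - i) (by exact_mod_cast (by omega : l - 1 - i < l))
  have hsat : satAux (l : ℕ∞) T' H' (l - 1 - k) φ :=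
    h l H' T' hHT' (l - 1 - k) (by omega)
  have h2 := (swap_sat l T' φ hφ H' (l - 1 - k) (by omega)).mp hsat
  rw [show l - 1 - (l - 1 - k) = k by omega] at h2
  refine (sat_ext l (T := fun i => T' (l - 1 - i)) (T' := T)
    (fun i hi => by simp only [hT']; rw [show l - 1 - (l - 1 - i) = i by omega])
    (swapTime φ) (fun i => H' (l - 1 - i)) H
    (fun i hi => by simp only [hH']; rw [show l - 1 - (l - 1 - i) = i by omega])
    k hk).mp h2

/-- Temporal Duality Theorem (finite traces): a W-free formula `φ` is a
THT_f-tautology iff `σ(φ)` is a THT_f-tautology. -/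
theorem temporal_duality {A : Type} (φ : Formula A) (hφ : WFree φ) :
    TautF φ ↔ TautF (swapTime φ) := by
  constructor
  · exact taut_swap φ hφ
  · intro h
    have := taut_swap (swapTime φ) (wfree_swap φ hφ) h
    rwa [swap_swap] at this
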